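/- arXiv:1205.0951 — 3 statements merged into one kernel-verified Lean document; each statement's English description precedes it below -/
import Mathlib

section
/- Let E and F be finite-dimensional complex vector spaces, let u : E → F be a surjective linear map and let v : F → E be an injective linear map. Then dim Z(v ∘ u) − dim Z(u ∘ v) = (dim ker(v ∘ u))², where Z(v ∘ u) is the centralizer of the endomorphism v ∘ u of E and Z(u ∘ v) is the centralizer of the endomorphism u ∘ v of F. -/
/-!
Write `T = v ∘ u` and `S = u ∘ v`. Since `v` is injective and `range T = range v`, an `A`
commuting with `T` preserves `range v`, so `A ↦ v⁻¹ ∘ A ∘ v` maps `Z(T)` to `Z(S)`. The image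
`B` satisfies `A ∘ v = v ∘ B` and `u ∘ A = B ∘ u`; conversely every `B ∈ Z(S)` arises this way,
because this pair of equations for `A` can always be solved, `u` being surjective and `v`
injective. The kernel consists of the `A` with `A ∘ v = 0` and `u ∘ A = 0`, i.e. of the maps
`E ⧸ range v → ker u`, and both `E ⧸ range v` and `ker u = ker (v ∘ u)` have dimension
`dim E - dim F`.
-/

open Module LinearMap Submodule

section VectorSpace

variable {K G M M' H : Type*} [Field K] [AddCommGroup G] [Module K G] [AddCommGroup M]
  [Module K M] [AddCommGroup M'] [Module K M'] [AddCommGroup H] [Module K H]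

theorem Submodule.finrank_map_add_finrank_inf_ker [FiniteDimensional K M] (f : M →ₗ[K] M')
    (p : Submodule K M) : finrank K (p.map f) + finrank K ↥(p ⊓ ker f) = finrank K p := by
  rw [← range_domRestrict, ← map_comap_subtype, finrank_map_subtype_eq, ← ker_domRestrict]
  exact (f.domRestrict p).finrank_range_add_finrank_ker

noncomputable def quotientHomToKer (f : G →ₗ[K] M) (g : M' →ₗ[K] H) :
    (M ⧸ range f →ₗ[K] ker g) →ₗ[K] M →ₗ[K] M' :=
  lcomp K M' (range f).mkQ ∘ₗ compRight K (ker g).subtype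

theorem injective_quotientHomToKer (f : G →ₗ[K] M) (g : M' →ₗ[K] H) :
    Function.Injective (quotientHomToKer f g) := by
  intro h₁ h₂ h
  rw [quotientHomToKer, comp_apply, comp_apply, lcomp_apply', lcomp_apply', compRight_apply,
    compRight_apply, cancel_right (range f).mkQ_surjective] at h
  exact cancel_left (ker g).injective_subtype |>.1 h

theorem range_quotientHomToKer (f : G →ₗ[K] M) (g : M' →ₗ[K] H) :
    range (quotientHomToKer f g) = ker (lcomp K M' f) ⊓ ker (compRight K g) := by
  ext A
  simp only [mem_inf, mem_ker, lcomp_apply', compRight_apply, mem_range]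
  constructor
  · rintro ⟨h, rfl⟩
    constructor
    · ext x
      simp [quotientHomToKer, (Quotient.mk_eq_zero _).2 (mem_range_self f x)]
    · ext x
      simp [quotientHomToKer]
  · rintro ⟨hAf, hgA⟩
    have hAg (x : M) : A x ∈ ker g := by simp [← comp_apply, hgA]
    refine ⟨(range f).liftQ (A.codRestrict _ hAg) ?_, ?_⟩
    · rintro _ ⟨x, rfl⟩
      simp [← comp_apply (f := A), hAf]
    · ext x
      simp [quotientHomToKer]

theorem finrank_ker_lcomp_inf_ker_compRight [FiniteDimensional K M]
    (f : G →ₗ[K] M) (g : M' →ₗ[K] H) :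
    finrank K ↥(ker (lcomp K M' f) ⊓ ker (compRight K g)) =
      finrank K (M ⧸ range f) * finrank K (ker g) := by
  rw [← range_quotientHomToKer, finrank_range_of_inj (injective_quotientHomToKer f g),
    finrank_linearMap]

theorem exists_comp_eq_and_comp_eq {u : M →ₗ[K] H} {v : G →ₗ[K] M'} (hu : Function.Surjective u)
    (hv : Function.Injective v) {a : G →ₗ[K] M} {c : M' →ₗ[K] H} (h : u ∘ₗ a = c ∘ₗ v) :
    ∃ A : M' →ₗ[K] M, A ∘ₗ v = a ∧ u ∘ₗ A = c := by
  obtain ⟨σ, hσ⟩ := u.exists_rightInverse_of_surjective (range_eq_top.2 hu)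
  obtain ⟨f, hf⟩ := v.exists_leftInverse_of_injective (ker_eq_bot.2 hv)
  -- lift `c` through `u`, then correct it on `range v` by a map with values in `ker u`
  refine ⟨σ ∘ₗ c + (a - σ ∘ₗ c ∘ₗ v) ∘ₗ f, ?_, ?_⟩
  · rw [add_comp, comp_assoc, comp_assoc, hf, comp_id]
    abel
  · rw [comp_add, ← comp_assoc, hσ, id_comp, ← comp_assoc, comp_sub, h, ← comp_assoc,
      ← comp_assoc, hσ, id_comp, sub_self, zero_comp, add_zero]

end VectorSpace

section Centralizer

variable {K E F : Type*} [Field K] [AddCommGroup E] [Module K E] [AddCommGroup F] [Module K F]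

theorem Module.End.mem_centralizer_singleton_iff {T A : Module.End K E} :
    A ∈ Subalgebra.centralizer K {T} ↔ T ∘ₗ A = A ∘ₗ T := by
  simp [Subalgebra.mem_centralizer_iff, Module.End.mul_eq_comp]

/-- On endomorphisms preserving `range v`, this is the restriction to `F ≅ range v`. -/
noncomputable def pullbackEnd (v : F →ₗ[K] E) : Module.End K E →ₗ[K] Module.End K F :=
  lcomp K F v ∘ₗ compRight K v.leftInverse

variable {u : E →ₗ[K] F} {v : F →ₗ[K] E} {A : Module.End K E}

theorem pullbackEnd_apply (A : Module.End K E) :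
    pullbackEnd v A = v.leftInverse ∘ₗ A ∘ₗ v :=
  rfl

theorem pullbackEnd_comp_of_mem_centralizer (hv : Function.Injective v)
    (hA : A ∈ Subalgebra.centralizer K {v ∘ₗ u}) : pullbackEnd v A ∘ₗ u = u ∘ₗ A := by
  rw [End.mem_centralizer_singleton_iff] at hA
  rw [pullbackEnd_apply, comp_assoc, comp_assoc, ← hA, ← comp_assoc, ← comp_assoc,
    leftInverse_comp_of_inj (ker_eq_bot.2 hv), id_comp]

theorem comp_pullbackEnd_of_mem_centralizer (hu : Function.Surjective u)
    (hv : Function.Injective v) (hA : A ∈ Subalgebra.centralizer K {v ∘ₗ u}) :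
    v ∘ₗ pullbackEnd v A = A ∘ₗ v := by
  rw [← cancel_right hu, comp_assoc, pullbackEnd_comp_of_mem_centralizer hv hA, comp_assoc,
    ← comp_assoc, End.mem_centralizer_singleton_iff.1 hA]

theorem map_pullbackEnd_centralizer (hu : Function.Surjective u) (hv : Function.Injective v) :
    (Subalgebra.toSubmodule (Subalgebra.centralizer K {v ∘ₗ u})).map (pullbackEnd v) =
      Subalgebra.toSubmodule (Subalgebra.centralizer K {u ∘ₗ v}) := by
  ext B
  simp only [mem_map, Subalgebra.mem_toSubmodule]
  constructor
  · rintro ⟨A, hA, rfl⟩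
    rw [End.mem_centralizer_singleton_iff, comp_assoc, comp_pullbackEnd_of_mem_centralizer hu hv hA,
      ← comp_assoc, ← pullbackEnd_comp_of_mem_centralizer hv hA, comp_assoc]
  · intro hB
    rw [End.mem_centralizer_singleton_iff] at hB
    obtain ⟨A, hAv, huA⟩ := exists_comp_eq_and_comp_eq hu hv (a := v ∘ₗ B) (c := B ∘ₗ u) (by
      rw [← comp_assoc, hB, comp_assoc])
    refine ⟨A, ?_, ?_⟩
    · rw [End.mem_centralizer_singleton_iff, comp_assoc, huA, ← comp_assoc, ← hAv, comp_assoc]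
    · rw [pullbackEnd_apply, hAv, ← comp_assoc, leftInverse_comp_of_inj (ker_eq_bot.2 hv),
        id_comp]

theorem centralizer_inf_ker_pullbackEnd (hu : Function.Surjective u) (hv : Function.Injective v) :
    Subalgebra.toSubmodule (Subalgebra.centralizer K {v ∘ₗ u}) ⊓ ker (pullbackEnd v) =
      ker (lcomp K E v) ⊓ ker (compRight K u) := by
  ext A
  simp only [mem_inf, Subalgebra.mem_toSubmodule, mem_ker, lcomp_apply', compRight_apply]
  constructor
  · rintro ⟨hA, hA0⟩
    rw [← comp_pullbackEnd_of_mem_centralizer hu hv hA,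
      ← pullbackEnd_comp_of_mem_centralizer hv hA, hA0, comp_zero, zero_comp]
    exact ⟨rfl, rfl⟩
  · rintro ⟨hAv, huA⟩
    constructor
    · rw [End.mem_centralizer_singleton_iff, comp_assoc, huA, ← comp_assoc, hAv, comp_zero,
        zero_comp]
    · rw [pullbackEnd_apply, hAv, comp_zero]

theorem finrank_quotient_range_eq_finrank_ker [FiniteDimensional K E]
    (hu : Function.Surjective u) (hv : Function.Injective v) :
    finrank K (E ⧸ range v) = finrank K (ker u) := by
  have hquot := (range v).finrank_quotient_add_finrank
  have hrank := u.finrank_range_add_finrank_ker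
  rw [finrank_range_of_inj hv] at hquot
  rw [range_eq_top.2 hu, finrank_top] at hrank
  omega

theorem finrank_centralizer_comp_eq [FiniteDimensional K E]
    (hu : Function.Surjective u) (hv : Function.Injective v) :
    finrank K (Subalgebra.centralizer K {v ∘ₗ u}) =
      finrank K (Subalgebra.centralizer K {u ∘ₗ v}) + finrank K (ker u) ^ 2 := by
  rw [← Subalgebra.finrank_toSubmodule, ← Subalgebra.finrank_toSubmodule,
    ← finrank_map_add_finrank_inf_ker (pullbackEnd v), map_pullbackEnd_centralizer hu hv,
    centralizer_inf_ker_pullbackEnd hu hv, finrank_ker_lcomp_inf_ker_compRight,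
    finrank_quotient_range_eq_finrank_ker hu hv, sq]

end Centralizer

theorem rigidity_pair_centralizer_dim_general
    (E F : Type*) [AddCommGroup E] [Module ℂ E] [AddCommGroup F] [Module ℂ F]
    [FiniteDimensional ℂ E]
    (u : E →ₗ[ℂ] F) (v : F →ₗ[ℂ] E)
    (hu : Function.Surjective u) (hv : Function.Injective v) :
    (Module.finrank ℂ
        (Subalgebra.centralizer ℂ ({v ∘ₗ u} : Set (Module.End ℂ E))) : ℤ)
      - (Module.finrank ℂ
        (Subalgebra.centralizer ℂ ({u ∘ₗ v} : Set (Module.End ℂ F))) : ℤ)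
      = (Module.finrank ℂ (LinearMap.ker (v ∘ₗ u)) : ℤ) ^ 2 := by
  rw [finrank_centralizer_comp_eq hu hv, ker_comp_of_ker_eq_bot u (ker_eq_bot.2 hv)]
  push_cast
  ring

/-- Let `E` and `F` be finite-dimensional complex vector spaces,
`u : E → F` a surjective linear map and `v : F → E` an injective linear map. Then
`dim Z(v ∘ u) − dim Z(u ∘ v) = (dim ker (v ∘ u))²`, where `Z(T)` denotes the
centralizer `{A : A T = T A}` of the endomorphism `T`. -/
theorem rigidity_pair_centralizer_dim
    (E F : Type*) [AddCommGroup E] [Module ℂ E] [AddCommGroup F] [Module ℂ F]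
    [FiniteDimensional ℂ E] [FiniteDimensional ℂ F]
    (u : E →ₗ[ℂ] F) (v : F →ₗ[ℂ] E)
    (hu : Function.Surjective u) (hv : Function.Injective v) :
    (Module.finrank ℂ
        (Subalgebra.centralizer ℂ ({v ∘ₗ u} : Set (Module.End ℂ E))) : ℤ)
      - (Module.finrank ℂ
        (Subalgebra.centralizer ℂ ({u ∘ₗ v} : Set (Module.End ℂ F))) : ℤ)
      = (Module.finrank ℂ (LinearMap.ker (v ∘ₗ u)) : ℤ) ^ 2 :=
  rigidity_pair_centralizer_dim_general E F u v hu hv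
end

section
/- Let S be a linear endomorphism of a finite-dimensional complex vector space E, let F := range S (which is an S-invariant subspace), and let S|_F denote the restriction of S to F, viewed as an endomorphism of F. Then dim Z(S) − dim Z(S|_F) = (dim ker S)², where Z(S) is the centralizer of S in End(E) and Z(S|_F) is the centralizer of S|_F in End(F). -/
/-!
An endomorphism commuting with `S` preserves `F = range S`, so restriction is a linear map
`Z(S) → Z(S|_F)`. It is surjective: `B ∈ Z(S|_F)` extends to `V` by `σ ∘ B ∘ S` on a complement
of `F`, where `σ` is a linear section of `S : V → F`. Its kernel consists of the `A ∈ Z(S)`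
vanishing on `F`; for these `S ∘ A = A ∘ S = 0`, so the kernel is `Hom(V ⧸ F, ker S)`, of dimension
`(dim ker S)²` by rank–nullity.
-/

open LinearMap Module

namespace Module.End

variable {K V : Type*} [Field K] [AddCommGroup V] [Module K V] (S : Module.End K V)

abbrev restrictRange : Module.End K (range S) :=
  S.restrict fun x _ => mem_range_self S x

variable {S}

theorem mem_centralizer_singleton_iff_s1 {A : Module.End K V} :
    A ∈ Subalgebra.centralizer K {S} ↔ Commute S A := by
  simp only [Subalgebra.mem_centralizer_iff, Set.mem_singleton_iff, forall_eq]
  rfl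

theorem mapsTo_range_of_commute {A : Module.End K V} (h : Commute S A) :
    Set.MapsTo A (range S) (range S) := by
  rintro _ ⟨y, rfl⟩
  exact ⟨A y, LinearMap.congr_fun h y⟩

variable (S)

def centralizerRestrictRange :
    Subalgebra.centralizer K {S} →ₗ[K] Subalgebra.centralizer K {S.restrictRange} where
  toFun A := ⟨(A : Module.End K V).restrict
      (mapsTo_range_of_commute (mem_centralizer_singleton_iff_s1.mp A.2)),
    mem_centralizer_singleton_iff_s1.mpr <| by
      ext f
      exact LinearMap.congr_fun (mem_centralizer_singleton_iff_s1.mp A.2) f⟩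
  map_add' _ _ := rfl
  map_smul' _ _ := rfl

theorem centralizerRestrictRange_surjective :
    Function.Surjective S.centralizerRestrictRange := by
  rintro ⟨B, hB⟩
  have hBS : ∀ f, S (B f) = B (S.rangeRestrict f) := fun f =>
    congr_arg Subtype.val (LinearMap.congr_fun (mem_centralizer_singleton_iff_s1.mp hB) f)
  obtain ⟨W, hW⟩ := (range S).exists_isCompl
  obtain ⟨σ, hσ⟩ := S.rangeRestrict.exists_rightInverse_of_surjective S.range_rangeRestrict
  have hSσ : ∀ f, S (σ f) = f := fun f => congr_arg Subtype.val (LinearMap.congr_fun hσ f)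
  let A := ofIsCompl hW ((range S).subtype ∘ₗ B) (σ ∘ₗ B ∘ₗ S.rangeRestrict ∘ₗ W.subtype)
  have hAu : ∀ u : range S, A u = B u := ofIsCompl_apply_left hW
  have hAw : ∀ w : W, A w = σ (B (S.rangeRestrict w)) := ofIsCompl_apply_right hW
  have hA : Commute S A := by
    ext x
    obtain ⟨u, w, rfl, -⟩ := Submodule.existsUnique_add_of_isCompl hW x
    have hAS : ∀ y, A (S y) = B (S.rangeRestrict y) := fun y => hAu (S.rangeRestrict y)
    show S (A (u + w)) = A (S (u + w))
    simp only [map_add, hAu, hAw, hBS, hSσ, hAS]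
  refine ⟨⟨A, mem_centralizer_singleton_iff_s1.mpr hA⟩, Subtype.ext (LinearMap.ext fun f => ?_)⟩
  exact Subtype.ext (hAu f)

theorem mem_ker_centralizerRestrictRange_iff {A : Subalgebra.centralizer K {S}} :
    A ∈ ker S.centralizerRestrictRange ↔ range S ≤ ker (A : Module.End K V) := by
  refine ⟨fun h y hy => ?_, fun h => Subtype.ext (LinearMap.ext fun f => Subtype.ext (h f.2))⟩
  exact congr_arg Subtype.val (LinearMap.congr_fun (congr_arg Subtype.val h) ⟨y, hy⟩)

theorem range_le_ker_of_mem_ker_centralizerRestrictRange {A : Subalgebra.centralizer K {S}}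
    (hA : A ∈ ker S.centralizerRestrictRange) : range (A : Module.End K V) ≤ ker S := by
  rintro _ ⟨x, rfl⟩
  rw [mem_ker, ← Module.End.mul_apply, (mem_centralizer_singleton_iff_s1.mp A.2).eq]
  exact (S.mem_ker_centralizerRestrictRange_iff.mp hA) (mem_range_self S x)

def kerCentralizerRestrictRangeEquiv :
    ker S.centralizerRestrictRange ≃ₗ[K] (V ⧸ range S →ₗ[K] ker S) where
  toFun A := (range S).liftQ ((A : Module.End K V).codRestrict (ker S)
      fun x => range_le_ker_of_mem_ker_centralizerRestrictRange S A.2 (mem_range_self _ x))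
    fun x hx => by simpa using (S.mem_ker_centralizerRestrictRange_iff.mp A.2) hx
  map_add' _ _ := by ext; rfl
  map_smul' _ _ := by ext; rfl
  invFun g := ⟨⟨(ker S).subtype ∘ₗ g ∘ₗ (range S).mkQ, mem_centralizer_singleton_iff_s1.mpr <| by
      ext x
      simp [(Submodule.Quotient.mk_eq_zero _).mpr (mem_range_self S x)]⟩,
    S.mem_ker_centralizerRestrictRange_iff.mpr fun x hx => by
      simp [(Submodule.Quotient.mk_eq_zero _).mpr hx]⟩
  left_inv _ := rfl
  right_inv _ := by ext; rfl

theorem finrank_quotient_range_eq_finrank_ker [FiniteDimensional K V] :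
    finrank K (V ⧸ range S) = finrank K (ker S) := by
  have h₁ := (range S).finrank_quotient_add_finrank
  have h₂ := S.finrank_range_add_finrank_ker
  omega

theorem finrank_centralizer_eq_finrank_centralizer_restrictRange_add [FiniteDimensional K V] :
    finrank K (Subalgebra.centralizer K {S}) =
      finrank K (Subalgebra.centralizer K {S.restrictRange}) + finrank K (ker S) ^ 2 := by
  rw [← LinearMap.finrank_range_add_finrank_ker (V := Subalgebra.centralizer K {S})
      (V₂ := Subalgebra.centralizer K {S.restrictRange}) S.centralizerRestrictRange,
    range_eq_top.mpr S.centralizerRestrictRange_surjective, finrank_top,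
    S.kerCentralizerRestrictRangeEquiv.finrank_eq, finrank_linearMap,
    finrank_quotient_range_eq_finrank_ker, sq]

end Module.End

/-- Let `S` be an endomorphism of a finite-dimensional complex vector
space `E`, let `F := range S` (an `S`-invariant subspace) and let `S|_F` be the
restriction of `S` to `F`, viewed as an endomorphism of `F`. Then
`dim Z(S) − dim Z(S|_F) = (dim ker S)²`, where `Z(·)` denotes the centralizer. -/
theorem centralizer_dim_sub_restrict_range
    (E : Type*) [AddCommGroup E] [Module ℂ E] [FiniteDimensional ℂ E]
    (S : Module.End ℂ E) :
    (Module.finrank ℂ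
        (Subalgebra.centralizer ℂ ({S} : Set (Module.End ℂ E))) : ℤ)
      - (Module.finrank ℂ
        (Subalgebra.centralizer ℂ
          ({S.restrict (fun x _ => LinearMap.mem_range_self S x)} :
            Set (Module.End ℂ (LinearMap.range S)))) : ℤ)
      = (Module.finrank ℂ (LinearMap.ker S) : ℤ) ^ 2 := by
  rw [S.finrank_centralizer_eq_finrank_centralizer_restrictRange_add]
  push_cast
  ring
end

section
/- Let E, E', F, F' be complex vector spaces, let T : E → E be linear, let F be a subspace of E containing range(T − id_E) (hence F is T-invariant), let j : F → E be the inclusion, and let p : E → F be the map T − id_E with codomain restricted to F. Let α : E → E', u' : E' → F', v' : F' → E' be linear maps and let β : F → F' be a linear isomorphism such that u' ∘ α = β ∘ p and v' ∘ β = α ∘ j. Then β ∘ (T|_F) = (id_{F'} + u' ∘ v') ∘ β; in particular the endomorphism T|_F of F is conjugate to the endomorphism id_{F'} + u' ∘ v' of F'. -/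
/-! Writing `T|_F = id + p ∘ j`, the two commuting squares give
`β ∘ p ∘ j = u' ∘ α ∘ j = u' ∘ v' ∘ β`, so `β` intertwines `T|_F` with `id + u' ∘ v'`. -/

namespace LinearMap

theorem restrict_eq_id_add_codRestrict_sub_one_comp_subtype {R M : Type*} [Ring R]
    [AddCommGroup M] [Module R M] (T : Module.End R M) (F : Submodule R M)
    (hF : ∀ x, (T - 1) x ∈ F) (hT : ∀ x ∈ F, T x ∈ F) :
    T.restrict hT = id + codRestrict F (T - 1) hF ∘ₗ F.subtype := by
  ext x
  simp

theorem comp_comp_eq_comp_comp_of_squares {R M N M' N' : Type*} [Semiring R]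
    [AddCommMonoid M] [Module R M] [AddCommMonoid N] [Module R N] [AddCommMonoid M']
    [Module R M'] [AddCommMonoid N'] [Module R N'] {p : M →ₗ[R] N} {j : N →ₗ[R] M}
    {α : M →ₗ[R] M'} {β : N →ₗ[R] N'} {u : M' →ₗ[R] N'} {v : N' →ₗ[R] M'}
    (hu : u ∘ₗ α = β ∘ₗ p) (hv : v ∘ₗ β = α ∘ₗ j) :
    β ∘ₗ p ∘ₗ j = u ∘ₗ v ∘ₗ β := by
  rw [← comp_assoc, ← hu, comp_assoc, hv]

end LinearMap

/-- Let `T : E → E` be linear, `F ⊆ E` a subspace containing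
`range (T − id)` (hence `T`-invariant), `j : F → E` the inclusion and
`p : E → F` the map `T − id` with codomain restricted to `F`.  Given linear maps
`α : E → E'`, `u' : E' → F'`, `v' : F' → E'` and a linear isomorphism `β : F ≃ F'`
with `u' ∘ α = β ∘ p` and `v' ∘ β = α ∘ j`, one has
`β ∘ (T|_F) = (id + u' ∘ v') ∘ β`; in particular `T|_F` is conjugate to
`id + u' ∘ v'`. -/
theorem restrict_conjugate_of_diagram
    (E E' F' : Type*) [AddCommGroup E] [Module ℂ E]
    [AddCommGroup E'] [Module ℂ E'] [AddCommGroup F'] [Module ℂ F']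
    (T : Module.End ℂ E) (F : Submodule ℂ E)
    (hF : LinearMap.range (T - 1) ≤ F)
    (hT : ∀ x ∈ F, T x ∈ F)
    (α : E →ₗ[ℂ] E') (u' : E' →ₗ[ℂ] F') (v' : F' →ₗ[ℂ] E')
    (β : F ≃ₗ[ℂ] F')
    (h1 : u' ∘ₗ α
        = (β : F →ₗ[ℂ] F') ∘ₗ
            LinearMap.codRestrict F (T - 1)
              (fun x => hF (LinearMap.mem_range_self (T - 1) x)))
    (h2 : v' ∘ₗ (β : F →ₗ[ℂ] F') = α ∘ₗ F.subtype) :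
    (β : F →ₗ[ℂ] F') ∘ₗ T.restrict hT
      = (LinearMap.id + u' ∘ₗ v') ∘ₗ (β : F →ₗ[ℂ] F') := by
  rw [LinearMap.restrict_eq_id_add_codRestrict_sub_one_comp_subtype T F
      (fun x => hF (LinearMap.mem_range_self (T - 1) x)),
    LinearMap.comp_add, LinearMap.add_comp, LinearMap.comp_comp_eq_comp_comp_of_squares h1 h2,
    LinearMap.comp_id, LinearMap.id_comp, LinearMap.comp_assoc]
end
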